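/- As λ → +∞ the Beta skew-normal density tends pointwise to the Beta half-normal density: for every x > 0, lim_{λ→∞} g(x; λ, a, b) = (2^b / B(a,b)) (2Φ(x) − 1)^{a−1} (1 − Φ(x))^{b−1} φ(x), and for every x < 0, lim_{λ→∞} g(x; λ, a, b) = 0. -/

import Mathlib

open MeasureTheory

/-- Standard normal density. -/
noncomputable def normPdf (x : ℝ) : ℝ := Real.exp (-x ^ 2 / 2) / Real.sqrt (2 * Real.pi)

/-- Standard normal cdf. -/
noncomputable def normCdf (x : ℝ) : ℝ := ∫ t in Set.Iic x, normPdf t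

/-- Skew-normal cdf with parameter `l`. -/
noncomputable def snCdf (l z : ℝ) : ℝ := ∫ t in Set.Iic z, 2 * normPdf t * normCdf (l * t)

/-- The Beta function. -/
noncomputable def betaFn (a b : ℝ) : ℝ := Real.Gamma a * Real.Gamma b / Real.Gamma (a + b)

/-- The Beta skew-normal density with parameters `l`, `a`, `b`. -/
noncomputable def bsnPdf (l a b x : ℝ) : ℝ :=
  (2 / betaFn a b) * snCdf l x ^ (a - 1) * (1 - snCdf l x) ^ (b - 1) * normPdf x *
    normCdf (l * x)

/-! For `x > 0`, dominated convergence gives `snCdf l x → 2 Φ(x) - 1` while `Φ(l x) → 1`, and the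
density is continuous in these quantities at the limit. For `x < 0` both `snCdf l x` and `Φ(l x)`
tend to `0`, but for `a < 1` the factor `snCdf l x ^ (a - 1)` blows up. Comparing the integrand on
`[u, x]` with `u = (1 + a / 2) x` gives `snCdf l x ≥ K Φ(l u)`, and the Gaussian tail bounds
`φ(y - 1) ≤ Φ(y) ≤ exp (-y² / 2)` (for `y ≤ 0`) make `Φ(l x) / Φ(l u) ^ (1 - a)` decay like
`exp (-c l²)`, because `(1 - a) u² < x²`. -/

open MeasureTheory ProbabilityTheory Set Filter Topology Real

lemma normPdf_eq_gaussianPDFReal : normPdf = gaussianPDFReal 0 1 := by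
  ext x
  simp [normPdf, gaussianPDFReal, div_eq_inv_mul]

lemma normPdf_pos (x : ℝ) : 0 < normPdf x := by
  rw [normPdf_eq_gaussianPDFReal]; exact gaussianPDFReal_pos _ _ _ one_ne_zero

lemma integrable_normPdf : Integrable normPdf := by
  rw [normPdf_eq_gaussianPDFReal]; exact integrable_gaussianPDFReal _ _

lemma continuous_normPdf : Continuous normPdf := by
  unfold normPdf; fun_prop

lemma normCdf_eq_cdf (x : ℝ) : normCdf x = cdf (gaussianReal 0 1) x := by
  rw [cdf_eq_real, measureReal_def, gaussianReal_apply_eq_integral _ one_ne_zero, normCdf,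
    normPdf_eq_gaussianPDFReal, ENNReal.toReal_ofReal
      (setIntegral_nonneg measurableSet_Iic fun t _ => gaussianPDFReal_nonneg 0 1 t)]

lemma normCdf_nonneg (x : ℝ) : 0 ≤ normCdf x := normCdf_eq_cdf x ▸ cdf_nonneg _ x

lemma normCdf_le_one (x : ℝ) : normCdf x ≤ 1 := normCdf_eq_cdf x ▸ cdf_le_one _ x

lemma monotone_normCdf : Monotone normCdf := fun x y h => by
  simpa only [normCdf_eq_cdf] using monotone_cdf _ h

lemma tendsto_normCdf_atTop : Tendsto normCdf atTop (𝓝 1) := by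
  simpa only [funext normCdf_eq_cdf] using tendsto_cdf_atTop _

lemma tendsto_normCdf_atBot : Tendsto normCdf atBot (𝓝 0) := by
  simpa only [funext normCdf_eq_cdf] using tendsto_cdf_atBot _

lemma normCdf_add_integral_Ioi (x : ℝ) : normCdf x + ∫ t in Ioi x, normPdf t = 1 := by
  rw [normCdf, ← setIntegral_union (Iic_disjoint_Ioi le_rfl) measurableSet_Ioi
    integrable_normPdf.integrableOn integrable_normPdf.integrableOn, Iic_union_Ioi,
    setIntegral_univ, normPdf_eq_gaussianPDFReal, integral_gaussianPDFReal_eq_one _ one_ne_zero]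

lemma normCdf_neg (x : ℝ) : normCdf (-x) = 1 - normCdf x := by
  have hsymm : ∀ t, normPdf (-t) = normPdf t := fun t => by simp [normPdf]
  rw [← normCdf_add_integral_Ioi x, add_sub_cancel_left, normCdf]
  calc ∫ t in Iic (-x), normPdf t = ∫ t in Iic (-x), normPdf (-t) := by simp only [hsymm]
    _ = ∫ t in Ioi x, normPdf t := by rw [integral_comp_neg_Iic, neg_neg]

lemma normCdf_zero : normCdf 0 = 1 / 2 := by
  have h := normCdf_neg 0
  rw [neg_zero] at h
  linarith

lemma normCdf_sub_normCdf {x y : ℝ} (h : x ≤ y) :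
    normCdf y - normCdf x = ∫ t in Ioc x y, normPdf t := by
  rw [normCdf, normCdf, ← Iic_union_Ioc_eq_Iic h, setIntegral_union (Iic_disjoint_Ioc le_rfl)
    measurableSet_Ioc integrable_normPdf.integrableOn integrable_normPdf.integrableOn,
    add_sub_cancel_left]

lemma setIntegral_normPdf_pos {s : Set ℝ} (hs : volume s ≠ 0) : 0 < ∫ t in s, normPdf t := by
  rw [setIntegral_pos_iff_support_of_nonneg_ae (ae_of_all _ fun t => (normPdf_pos t).le)
    integrable_normPdf.integrableOn, Function.support_eq_univ fun t => (normPdf_pos t).ne',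
    univ_inter]
  exact pos_iff_ne_zero.2 hs

lemma normCdf_lt_one (x : ℝ) : normCdf x < 1 := by
  linarith [normCdf_add_integral_Ioi x, setIntegral_normPdf_pos (s := Ioi x) (by simp)]

lemma one_half_lt_normCdf {x : ℝ} (hx : 0 < x) : 1 / 2 < normCdf x := by
  linarith [normCdf_sub_normCdf hx.le, normCdf_zero,
    setIntegral_normPdf_pos (s := Ioc 0 x) (by simpa using hx)]

lemma normPdf_le_normPdf {s t : ℝ} (h : |t| ≤ |s|) : normPdf s ≤ normPdf t := by
  have hsq : t ^ 2 ≤ s ^ 2 := sq_le_sq.2 h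
  unfold normPdf
  gcongr ?_ / _
  exact exp_le_exp.2 (by linarith)

lemma normCdf_le_exp {y : ℝ} (hy : y ≤ 0) : normCdf y ≤ exp (-y ^ 2 / 2) := by
  have hshift : ∀ t ∈ Iic y, normPdf t ≤ exp (-y ^ 2 / 2) * normPdf (t - y) := by
    intro t ht
    unfold normPdf
    rw [← mul_div_assoc, ← exp_add]
    gcongr
    nlinarith [mul_nonneg (neg_nonneg.mpr hy) (neg_nonneg.mpr (sub_nonpos.mpr (mem_Iic.mp ht)))]
  calc normCdf y ≤ ∫ t in Iic y, exp (-y ^ 2 / 2) * normPdf (t - y) :=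
        setIntegral_mono_on integrable_normPdf.integrableOn
          ((integrable_normPdf.comp_sub_right y).const_mul _).integrableOn measurableSet_Iic hshift
    _ ≤ ∫ t, exp (-y ^ 2 / 2) * normPdf (t - y) :=
        setIntegral_le_integral ((integrable_normPdf.comp_sub_right y).const_mul _)
          (ae_of_all _ fun t => mul_nonneg (exp_nonneg _) (normPdf_pos _).le)
    _ = exp (-y ^ 2 / 2) := by
      rw [integral_const_mul, integral_sub_right_eq_self normPdf y, normPdf_eq_gaussianPDFReal,
        integral_gaussianPDFReal_eq_one _ one_ne_zero, mul_one]

lemma normPdf_sub_one_le_normCdf {y : ℝ} (hy : y ≤ 0) : normPdf (y - 1) ≤ normCdf y := by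
  calc normPdf (y - 1) = normPdf (y - 1) * volume.real (Ioc (y - 1) y) := by simp
    _ ≤ ∫ t in Ioc (y - 1) y, normPdf t :=
        setIntegral_ge_of_const_le_real measurableSet_Ioc measure_Ioc_lt_top.ne
          (fun t ht => normPdf_le_normPdf (abs_le_abs_of_nonpos (ht.2.trans hy) ht.1.le))
          integrable_normPdf.integrableOn
    _ ≤ normCdf y :=
        setIntegral_mono_set integrable_normPdf.integrableOn
          (ae_of_all _ fun t => (normPdf_pos t).le) Ioc_subset_Iic_self.eventuallyLE

/-- The skew-normal density; `snCdf l z` is definitionally `∫ t in Iic z, snPdf l t`. -/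
noncomputable def snPdf (l t : ℝ) : ℝ := 2 * normPdf t * normCdf (l * t)

lemma snPdf_nonneg (l t : ℝ) : 0 ≤ snPdf l t :=
  mul_nonneg (mul_nonneg zero_le_two (normPdf_pos t).le) (normCdf_nonneg _)

lemma snPdf_le (l t : ℝ) : snPdf l t ≤ 2 * normPdf t :=
  mul_le_of_le_one_right (mul_nonneg zero_le_two (normPdf_pos t).le) (normCdf_le_one _)

lemma norm_snPdf_le (l t : ℝ) : ‖snPdf l t‖ ≤ 2 * normPdf t := by
  rw [Real.norm_of_nonneg (snPdf_nonneg l t)]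
  exact snPdf_le l t

lemma measurable_snPdf (l : ℝ) : Measurable (snPdf l) :=
  (continuous_normPdf.measurable.const_mul 2).mul
    (monotone_normCdf.measurable.comp (measurable_const_mul l))

lemma integrable_snPdf (l : ℝ) : Integrable (snPdf l) :=
  (integrable_normPdf.const_mul 2).mono' (measurable_snPdf l).aestronglyMeasurable
    (ae_of_all _ (norm_snPdf_le l))

lemma snCdf_nonneg (l z : ℝ) : 0 ≤ snCdf l z :=
  setIntegral_nonneg measurableSet_Iic fun t _ => snPdf_nonneg l t

lemma snCdf_le_two_mul_normCdf (l z : ℝ) : snCdf l z ≤ 2 * normCdf z :=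
  calc snCdf l z ≤ ∫ t in Iic z, 2 * normPdf t :=
        setIntegral_mono (integrable_snPdf l).integrableOn
          (integrable_normPdf.const_mul 2).integrableOn (snPdf_le l)
    _ = 2 * normCdf z := integral_const_mul _ _

lemma tendsto_normCdf_mul_atTop_of_neg {z : ℝ} (hz : z < 0) :
    Tendsto (fun l => normCdf (l * z)) atTop (𝓝 0) :=
  tendsto_normCdf_atBot.comp (tendsto_id.atTop_mul_const_of_neg hz)

lemma tendsto_normCdf_mul_atTop_of_pos {z : ℝ} (hz : 0 < z) :
    Tendsto (fun l => normCdf (l * z)) atTop (𝓝 1) :=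
  tendsto_normCdf_atTop.comp (tendsto_id.atTop_mul_const hz)

lemma snCdf_le_one {z : ℝ} (hz : z ≤ 0) (l : ℝ) : snCdf l z ≤ 1 := by
  linarith [snCdf_le_two_mul_normCdf l z, monotone_normCdf hz, normCdf_zero]

lemma tendsto_snPdf_atTop {t : ℝ} (ht : t ≠ 0) :
    Tendsto (fun l => snPdf l t) atTop (𝓝 ((Ioi 0).indicator (fun s => 2 * normPdf s) t)) := by
  rcases ht.lt_or_gt with ht | ht
  · rw [indicator_of_notMem (show t ∉ Ioi 0 from not_lt.2 ht.le), ← mul_zero (2 * normPdf t)]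
    exact tendsto_const_nhds.mul (tendsto_normCdf_mul_atTop_of_neg ht)
  · rw [indicator_of_mem (mem_Ioi.2 ht), ← mul_one (2 * normPdf t)]
    exact tendsto_const_nhds.mul (tendsto_normCdf_mul_atTop_of_pos ht)

lemma tendsto_snCdf_atTop (z : ℝ) :
    Tendsto (fun l => snCdf l z) atTop (𝓝 (2 * ∫ t in Ioc 0 z, normPdf t)) := by
  have hlim : ∫ t in Iic z, (Ioi 0).indicator (fun s => 2 * normPdf s) t
      = 2 * ∫ t in Ioc 0 z, normPdf t := by
    rw [integral_indicator measurableSet_Ioi, Measure.restrict_restrict measurableSet_Ioi,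
      Ioi_inter_Iic, integral_const_mul]
  rw [← hlim]
  refine tendsto_integral_filter_of_dominated_convergence (fun t => 2 * normPdf t)
    (.of_forall fun l => (measurable_snPdf l).aestronglyMeasurable)
    (.of_forall fun l => ae_of_all _ (norm_snPdf_le l))
    (integrable_normPdf.const_mul 2).integrableOn (ae_restrict_of_ae ?_)
  have hne : ∀ᵐ t : ℝ, t ≠ 0 := compl_mem_ae_iff.2 (measure_singleton 0)
  exact hne.mono fun t ht => tendsto_snPdf_atTop ht

lemma tendsto_snCdf_atTop_of_pos {z : ℝ} (hz : 0 < z) :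
    Tendsto (fun l => snCdf l z) atTop (𝓝 (2 * normCdf z - 1)) := by
  convert tendsto_snCdf_atTop z using 2
  rw [← normCdf_sub_normCdf hz.le, normCdf_zero]
  ring

lemma tendsto_snCdf_atTop_of_neg {z : ℝ} (hz : z < 0) :
    Tendsto (fun l => snCdf l z) atTop (𝓝 0) := by
  simpa [Ioc_eq_empty_of_le hz.le] using tendsto_snCdf_atTop z

lemma mul_normPdf_mul_normCdf_le_snCdf {l u z : ℝ} (hl : 0 ≤ l) (huz : u < z) (hz : z ≤ 0) :
    2 * normPdf u * normCdf (l * u) * (z - u) ≤ snCdf l z := by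
  have hbound : ∀ t ∈ Ioc u z, 2 * normPdf u * normCdf (l * u) ≤ snPdf l t := fun t ht => by
    have hut : |t| ≤ |u| := abs_le_abs_of_nonpos (ht.2.trans hz) ht.1.le
    exact mul_le_mul (by linarith [normPdf_le_normPdf hut]) (monotone_normCdf
      (mul_le_mul_of_nonneg_left ht.1.le hl)) (normCdf_nonneg _)
      (mul_nonneg zero_le_two (normPdf_pos t).le)
  calc 2 * normPdf u * normCdf (l * u) * (z - u)
      = 2 * normPdf u * normCdf (l * u) * volume.real (Ioc u z) := by
        rw [Real.volume_real_Ioc_of_le huz.le]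
    _ ≤ ∫ t in Ioc u z, snPdf l t :=
        setIntegral_ge_of_const_le_real measurableSet_Ioc measure_Ioc_lt_top.ne hbound
          (integrable_snPdf l).integrableOn
    _ ≤ snCdf l z :=
        setIntegral_mono_set (integrable_snPdf l).integrableOn
          (ae_of_all _ (snPdf_nonneg l)) Ioc_subset_Iic_self.eventuallyLE

lemma tendsto_quadratic_atBot {p : ℝ} (hp : p < 0) (q r : ℝ) :
    Tendsto (fun l : ℝ => p * l ^ 2 + q * l + r) atTop atBot := by
  have hlin : Tendsto (fun l : ℝ => p * l + q) atTop atBot :=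
    tendsto_atBot_add_const_right _ q (tendsto_id.const_mul_atTop_of_neg hp)
  exact (tendsto_atBot_add_const_right _ r (tendsto_id.atTop_mul_atBot₀ hlin)).congr
    fun l => by simp only [id]; ring

lemma tendsto_snCdf_rpow_mul_normCdf_of_lt_one {a z : ℝ} (ha : 0 < a) (ha1 : a < 1)
    (hz : z < 0) : Tendsto (fun l => snCdf l z ^ (a - 1) * normCdf (l * z)) atTop (𝓝 0) := by
  set u := (1 + a / 2) * z with hu
  have huz : u < z := by nlinarith
  set K := 2 * normPdf u * (z - u)
  have hK : 0 < K := mul_pos (mul_pos two_pos (normPdf_pos u)) (by linarith)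
  set p := ((1 - a) * u ^ 2 - z ^ 2) / 2
  have hp : p < 0 := by
    have hp' : p = -(a ^ 2 * (3 + a) * z ^ 2) / 8 := by simp only [p, hu]; ring
    have hz2 : 0 < z ^ 2 := by nlinarith
    rw [hp']
    have : 0 < a ^ 2 * (3 + a) * z ^ 2 := by positivity
    linarith
  have hbound : ∀ l : ℝ, 0 ≤ l → snCdf l z ^ (a - 1) * normCdf (l * z) ≤
      (K / √(2 * π)) ^ (a - 1) * exp (p * l ^ 2 + (a - 1) * u * l + (1 - a) / 2) := by
    intro l hl
    have hlower : K * normPdf (l * u - 1) ≤ snCdf l z :=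
      calc K * normPdf (l * u - 1) ≤ K * normCdf (l * u) :=
            mul_le_mul_of_nonneg_left (normPdf_sub_one_le_normCdf (by nlinarith)) hK.le
        _ ≤ snCdf l z := by
            simpa only [K, mul_right_comm _ (z - u)] using
              mul_normPdf_mul_normCdf_le_snCdf hl huz hz.le
    have hKpos : 0 < K * normPdf (l * u - 1) := mul_pos hK (normPdf_pos _)
    calc snCdf l z ^ (a - 1) * normCdf (l * z)
        ≤ (K * normPdf (l * u - 1)) ^ (a - 1) * exp (-(l * z) ^ 2 / 2) :=
          mul_le_mul (rpow_le_rpow_of_nonpos hKpos hlower (by linarith))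
            (normCdf_le_exp (by nlinarith)) (normCdf_nonneg _) (rpow_nonneg hKpos.le _)
      _ = (K / √(2 * π)) ^ (a - 1) * exp (p * l ^ 2 + (a - 1) * u * l + (1 - a) / 2) := by
          have hKpdf : K * normPdf (l * u - 1) = K / √(2 * π) * exp (-(l * u - 1) ^ 2 / 2) := by
            rw [normPdf]; ring
          rw [hKpdf, mul_rpow (by positivity) (exp_nonneg _), ← exp_mul, mul_assoc, ← exp_add]
          congr 2
          ring
  refine squeeze_zero' (.of_forall fun l => mul_nonneg (rpow_nonneg (snCdf_nonneg l z) _)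
    (normCdf_nonneg _)) ((eventually_ge_atTop 0).mono hbound) ?_
  simpa using (tendsto_exp_atBot.comp (tendsto_quadratic_atBot hp _ _)).const_mul
    ((K / √(2 * π)) ^ (a - 1))

lemma tendsto_snCdf_rpow_mul_normCdf {a z : ℝ} (ha : 0 < a) (hz : z < 0) :
    Tendsto (fun l => snCdf l z ^ (a - 1) * normCdf (l * z)) atTop (𝓝 0) := by
  rcases lt_or_ge a 1 with ha1 | ha1
  · exact tendsto_snCdf_rpow_mul_normCdf_of_lt_one ha ha1 hz
  refine squeeze_zero' (.of_forall fun l => mul_nonneg (rpow_nonneg (snCdf_nonneg l z) _)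
    (normCdf_nonneg _)) (.of_forall fun l => ?_) (tendsto_normCdf_mul_atTop_of_neg hz)
  exact mul_le_of_le_one_left (normCdf_nonneg _)
    (rpow_le_one (snCdf_nonneg l z) (snCdf_le_one hz.le l) (by linarith))

lemma tendsto_bsnPdf_atTop_of_pos (a b : ℝ) {x : ℝ} (hx : 0 < x) :
    Tendsto (fun l => bsnPdf l a b x) atTop (𝓝 ((2 ^ b / betaFn a b) *
      (2 * normCdf x - 1) ^ (a - 1) * (1 - normCdf x) ^ (b - 1) * normPdf x)) := by
  have hS := tendsto_snCdf_atTop_of_pos hx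
  have hpos : 0 < 2 * normCdf x - 1 := by linarith [one_half_lt_normCdf hx]
  have hcompl : 1 - (2 * normCdf x - 1) = 2 * (1 - normCdf x) := by ring
  have hlim : (2 ^ b / betaFn a b) * (2 * normCdf x - 1) ^ (a - 1) * (1 - normCdf x) ^ (b - 1) *
      normPdf x = (2 / betaFn a b) * (2 * normCdf x - 1) ^ (a - 1) *
        (1 - (2 * normCdf x - 1)) ^ (b - 1) * normPdf x * 1 := by
    rw [hcompl, mul_rpow zero_le_two (by linarith [normCdf_le_one x]), rpow_sub_one two_ne_zero]
    ring
  rw [hlim]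
  exact (((tendsto_const_nhds.mul (hS.rpow_const (.inl hpos.ne'))).mul
    ((tendsto_const_nhds.sub hS).rpow_const (.inl (by linarith [normCdf_lt_one x])))).mul
    tendsto_const_nhds).mul (tendsto_normCdf_mul_atTop_of_pos hx)

lemma tendsto_bsnPdf_atTop_of_neg {a : ℝ} (b : ℝ) (ha : 0 < a) {x : ℝ} (hx : x < 0) :
    Tendsto (fun l => bsnPdf l a b x) atTop (𝓝 0) := by
  have hfactor : (fun l => bsnPdf l a b x) = fun l => (2 / betaFn a b) * normPdf x *
      (1 - snCdf l x) ^ (b - 1) * (snCdf l x ^ (a - 1) * normCdf (l * x)) := by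
    ext l; simp only [bsnPdf]; ring
  rw [hfactor]
  have hcompl : Tendsto (fun l => (1 - snCdf l x) ^ (b - 1)) atTop (𝓝 ((1 - 0) ^ (b - 1))) :=
    (tendsto_const_nhds.sub (tendsto_snCdf_atTop_of_neg hx)).rpow_const (.inl (by norm_num))
  simpa using (tendsto_const_nhds.mul hcompl).mul (tendsto_snCdf_rpow_mul_normCdf ha hx)

theorem bsn_tendsto_bhn_general (a b : ℝ) (ha : 0 < a) :
    (∀ x : ℝ, 0 < x →
      Filter.Tendsto (fun l : ℝ => bsnPdf l a b x) Filter.atTop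
        (nhds ((2 ^ b / betaFn a b) * (2 * normCdf x - 1) ^ (a - 1) *
          (1 - normCdf x) ^ (b - 1) * normPdf x))) ∧
    (∀ x : ℝ, x < 0 →
      Filter.Tendsto (fun l : ℝ => bsnPdf l a b x) Filter.atTop (nhds 0)) :=
  ⟨fun _ hx => tendsto_bsnPdf_atTop_of_pos a b hx,
    fun _ hx => tendsto_bsnPdf_atTop_of_neg b ha hx⟩

/-- As `l → +∞` the Beta skew-normal density tends pointwise to the Beta
half-normal density for `x > 0`, and to `0` for `x < 0`. -/
theorem bsn_tendsto_bhn (a b : ℝ) (ha : 0 < a) (hb : 0 < b) :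
    (∀ x : ℝ, 0 < x →
      Filter.Tendsto (fun l : ℝ => bsnPdf l a b x) Filter.atTop
        (nhds ((2 ^ b / betaFn a b) * (2 * normCdf x - 1) ^ (a - 1) *
          (1 - normCdf x) ^ (b - 1) * normPdf x))) ∧
    (∀ x : ℝ, x < 0 →
      Filter.Tendsto (fun l : ℝ => bsnPdf l a b x) Filter.atTop (nhds 0)) :=
  bsn_tendsto_bhn_general a b ha
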